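/- arXiv:math/0005281 — 2 statements merged into one kernel-verified Lean document; each statement's English description precedes it below -/
import Mathlib

section
/- Let C be a nonzero 𝔽[z,z^{-1}]-submodule of 𝔽^n[z,z^{-1}] (equivalently, a nonzero 𝔽[z]-submodule of 𝔽^n[z]), viewed as a set of finite-support sequences in (𝔽^n)^ℤ. Then C is controllable and not complete (equivalently, not closed in the product topology). -/
open Matrix

section ConvolutionalDefs

variable {𝔽 : Type} [Field 𝔽]

/-- The left shift `(σw)_t = w_{t+1}` on bi-infinite sequences. -/
def shiftZ {A : Type} (w : ℤ → A) : ℤ → A := fun t => w (t + 1)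

/-- A set of bi-infinite sequences is shift-invariant if `σX ⊆ X`. -/
def ShiftInvariant {A : Type} (X : Set (ℤ → A)) : Prop := ∀ w ∈ X, shiftZ w ∈ X

/-- A block `β` occurs in the bi-infinite sequence `w` if `β = w_j w_{j+1} … w_{j+k-1}`
for some `j ∈ ℤ`. -/
def BlockOccursIn {A : Type} (β : List A) (w : ℤ → A) : Prop :=
  ∃ j : ℤ, ∀ l : Fin β.length, β.get l = w (j + ((l : ℕ) : ℤ))

/-- A block occurs in some element of the set `X`. -/
def OccursInSome {A : Type} (β : List A) (X : Set (ℤ → A)) : Prop :=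
  ∃ w ∈ X, BlockOccursIn β w

/-- A set of sequences is irreducible if any ordered pair of blocks occurring in it can be
completed to a single block occurring in it. -/
def IrreducibleShift {A : Type} (X : Set (ℤ → A)) : Prop :=
  ∀ β γ : List A, OccursInSome β X → OccursInSome γ X →
    ∃ μ : List A, OccursInSome (β ++ μ ++ γ) X

/-- A subset of a module is `𝔽`-linear. -/
def IsLinearSet' (𝔽 : Type) [Field 𝔽] {M : Type} [AddCommGroup M] [Module 𝔽 M]
    (C : Set M) : Prop :=
  (0 : M) ∈ C ∧ (∀ x ∈ C, ∀ y ∈ C, x + y ∈ C) ∧ ∀ (c : 𝔽), ∀ x ∈ C, c • x ∈ C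

/-- A behavior `B` is complete if membership can be decided on finite windows:
any `w` which agrees on every finite interval with some element of `B` lies in `B`. -/
def CompleteBehavior {A : Type} (B : Set (ℤ → A)) : Prop :=
  ∀ w : ℤ → A, (∀ a b : ℤ, ∃ x ∈ B, ∀ t : ℤ, a ≤ t → t ≤ b → x t = w t) → w ∈ B

/-- A behavior `B ⊆ (𝔽^n)^ℤ` is controllable if there is `ℓ ≥ 0` such that any past of a
trajectory of `B` can be concatenated, after a lag of length `ℓ`, with any future of a
trajectory of `B`. -/
def ControllableBehavior {A : Type} (B : Set (ℤ → A)) : Prop :=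
  ∃ ℓ : ℕ, ∀ w ∈ B, ∀ w' ∈ B, ∀ j : ℤ, ∃ w'' ∈ B,
    (∀ t : ℤ, t ≤ j → w'' t = w t) ∧ (∀ t : ℤ, j + (ℓ : ℤ) ≤ t → w'' t = w' t)

/-- The operator `G(σ)` associated to a Laurent-polynomial matrix `G(z) = Σ_i G_i z^i`:
`(G(σ)m)_t = Σ_i G_i m_{t+i}`. -/
noncomputable def lSigma {n k : ℕ} (G : Matrix (Fin n) (Fin k) (LaurentPolynomial 𝔽))
    (m : ℤ → Fin k → 𝔽) : ℤ → Fin n → 𝔽 :=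
  fun t a => ∑ b : Fin k, (AddMonoidAlgebra.coeff (G a b)).sum fun i c => c * m (t + i) b

/-- The operator `P(σ)` associated to a polynomial matrix, acting on two-sided sequences. -/
noncomputable def pSigma {n k : ℕ} (P : Matrix (Fin n) (Fin k) (Polynomial 𝔽))
    (w : ℤ → Fin k → 𝔽) : ℤ → Fin n → 𝔽 :=
  fun t a => ∑ b : Fin k, (P a b).sum fun i c => c * w (t + (i : ℤ)) b

/-- The operator `P(σ)` associated to a polynomial matrix, acting on one-sided sequences. -/
noncomputable def pSigmaPlus {n k : ℕ} (P : Matrix (Fin n) (Fin k) (Polynomial 𝔽))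
    (w : ℕ → Fin k → 𝔽) : ℕ → Fin n → 𝔽 :=
  fun t a => ∑ b : Fin k, (P a b).sum fun i c => c * w (t + i) b

/-- View a vector of formal Laurent series as a bi-infinite sequence. -/
def lsToSeq {n : ℕ} (v : Fin n → LaurentSeries 𝔽) : ℤ → Fin n → 𝔽 :=
  fun t a => (v a).coeff t

/-- View a vector of Laurent polynomials as a (finite-support) bi-infinite sequence. -/
def lpToSeq {n : ℕ} (v : Fin n → LaurentPolynomial 𝔽) : ℤ → Fin n → 𝔽 :=
  fun t a => AddMonoidAlgebra.coeff (v a) t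

/-- The pairing `(w,v) = Σ_i ⟨w_i, v_i⟩` between a bi-infinite sequence and a finite-support
(Laurent polynomial) vector. -/
noncomputable def seqPairing {n : ℕ} (w : ℤ → Fin n → 𝔽) (v : Fin n → LaurentPolynomial 𝔽) : 𝔽 :=
  ∑ a : Fin n, (AddMonoidAlgebra.coeff (v a)).sum fun i c => w i a * c

/-- The `j`-th column degree of a polynomial matrix. -/
def colDeg {n k : ℕ} (G : Matrix (Fin n) (Fin k) (Polynomial 𝔽)) (j : Fin k) : ℕ :=
  Finset.univ.sup fun i => (G i j).natDegree

/-- The `i`-th row degree of a polynomial matrix. -/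
def rowDeg {r n : ℕ} (P : Matrix (Fin r) (Fin n) (Polynomial 𝔽)) (i : Fin r) : ℕ :=
  Finset.univ.sup fun j => (P i j).natDegree

/-- A polynomial `n×k` matrix is column reduced if the constant matrix of leading column
coefficients has rank `k`. -/
def ColumnReduced {n k : ℕ} (G : Matrix (Fin n) (Fin k) (Polynomial 𝔽)) : Prop :=
  Matrix.rank (Matrix.of fun i j => (G i j).coeff (colDeg G j)) = k

/-- A polynomial `r×n` matrix is row reduced if the constant matrix of leading row
coefficients has rank `r`. -/
def RowReduced {r n : ℕ} (P : Matrix (Fin r) (Fin n) (Polynomial 𝔽)) : Prop :=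
  Matrix.rank (Matrix.of fun i j => (P i j).coeff (rowDeg P i)) = r

/-- A matrix over a commutative ring is right prime if it has a left inverse over the ring. -/
def RightPrime {R : Type} [CommRing R] {m l : Type} [Fintype m] [Fintype l] [DecidableEq l]
    (G : Matrix m l R) : Prop :=
  ∃ L : Matrix l m R, L * G = 1

/-- A matrix over a commutative ring is left prime if it has a right inverse over the ring. -/
def LeftPrime {R : Type} [CommRing R] {m l : Type} [Fintype m] [Fintype l] [DecidableEq m]
    (P : Matrix m l R) : Prop :=
  ∃ Q : Matrix l m R, P * Q = 1

end ConvolutionalDefs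

/-- View a vector of polynomials as a (finite-support) bi-infinite sequence supported on `ℤ₊`. -/
noncomputable def pToSeq {𝔽 : Type} [Field 𝔽] {n : ℕ} (v : Fin n → Polynomial 𝔽) :
    ℤ → Fin n → 𝔽 :=
  fun t a => if 0 ≤ t then (v a).coeff t.toNat else 0

/-!
Both rings `𝔽[z]` and `𝔽[z,z⁻¹]` are Noetherian, so the module is generated by finitely many
vectors, all of whose coefficients sit in some window `[-M, M]`. Writing two trajectories as
combinations of these generators and splicing the coefficient polynomials at time `j + M`
gives a trajectory of the module that agrees with the first one up to time `j` and with the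
second one from time `j + 2M + 1` on. Viewing an `𝔽[z]`-module inside `𝔽^n[z,z⁻¹]`, both cases
are covered, since both coefficient rings are closed under splicing.

For non-completeness take a nonzero `v` in the module, supported in `[A, A + N)`. The sequence
repeating the block of `v` forever to the right agrees on every finite window with one of the
finite sums `v + z^N v + ⋯ + z^(KN) v`, hence lies in the closure, but its support is infinite.
-/

namespace LaurentPolynomial

section Semiring

variable {R : Type*} [Semiring R]

noncomputable def splice (p q : R[T;T⁻¹]) (s : ℤ) : R[T;T⁻¹] :=
  AddMonoidAlgebra.ofCoeff (p.coeff.filter (· ≤ s) + q.coeff.filter (s < ·))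

theorem coeff_splice_of_le {p q : R[T;T⁻¹]} {s t : ℤ} (h : t ≤ s) :
    (splice p q s).coeff t = p.coeff t := by
  simp [splice, h, not_lt.mpr h]

theorem coeff_splice_of_lt {p q : R[T;T⁻¹]} {s t : ℤ} (h : s < t) :
    (splice p q s).coeff t = q.coeff t := by
  simp [splice, h, not_le.mpr h]

theorem coeff_T_mul (m t : ℤ) (f : R[T;T⁻¹]) : (T m * f).coeff t = f.coeff (t - m) := by
  rw [T, AddMonoidAlgebra.coeff_single_mul_apply, one_mul, neg_add_eq_sub]

theorem exists_coeff_bound {ι : Type*} [Fintype ι] (S : Finset (ι → R[T;T⁻¹])) :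
    ∃ M : ℕ, ∀ g ∈ S, ∀ a y, (g a).coeff y ≠ 0 → y.natAbs ≤ M := by
  let bound (f : R[T;T⁻¹]) : ℕ := f.coeff.support.sup Int.natAbs
  refine ⟨S.sup fun g => Finset.univ.sup fun a => bound (g a), fun g hg a _ hy => ?_⟩
  calc _ ≤ bound (g a) := Finset.le_sup (Finsupp.mem_support_iff.mpr hy)
    _ ≤ Finset.univ.sup fun a => bound (g a) := Finset.le_sup (f := fun a => bound (g a)) (by simp)
    _ ≤ _ := Finset.le_sup (f := fun g => Finset.univ.sup fun a => bound (g a)) hg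

end Semiring

theorem coeff_mul_congr {R : Type*} [Ring R] {p q g : R[T;T⁻¹]} {t : ℤ}
    (h : ∀ x y, x + y = t → g.coeff y ≠ 0 → p.coeff x = q.coeff x) :
    (p * g).coeff t = (q * g).coeff t := by
  classical
  rw [← sub_eq_zero, ← Finsupp.sub_apply, ← AddMonoidAlgebra.coeff_sub, ← sub_mul,
    AddMonoidAlgebra.coeff_mul]
  refine Finset.sum_eq_zero fun x _ => Finset.sum_eq_zero fun y hy => ?_
  dsimp only
  split_ifs with hxy
  · rw [AddMonoidAlgebra.coeff_sub, Finsupp.sub_apply, h x y hxy (Finsupp.mem_support_iff.mp hy),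
      sub_self, zero_mul]
  · rfl

section ToLaurent

open Polynomial

variable {R : Type*} [Semiring R]

theorem coeff_toLaurent_apply (p : R[X]) (t : ℤ) :
    (toLaurent p).coeff t = if 0 ≤ t then p.coeff t.toNat else 0 := by
  rw [coeff_toLaurent]
  split_ifs with ht
  · lift t to ℕ using ht
    exact Finsupp.mapDomain_apply Nat.castEmbedding.injective _ t
  · exact Finsupp.mapDomain_of_notMem_range _ _ fun ⟨k, hk⟩ => ht (hk ▸ Int.natCast_nonneg k)

theorem toLaurent_trunc {f : R[T;T⁻¹]} (hf : ∀ t < 0, f.coeff t = 0) :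
    toLaurent (trunc f) = f := by
  ext t
  rw [coeff_toLaurent_apply]
  split_ifs with ht
  · lift t to ℕ using ht
    rfl
  · exact (hf t (not_le.mp ht)).symm

theorem splice_toLaurent_mem_range (p q : R[X]) (s : ℤ) :
    splice (toLaurent p) (toLaurent q) s ∈ Set.range toLaurent := by
  refine ⟨trunc _, toLaurent_trunc fun t ht => ?_⟩
  rcases le_or_gt t s with hts | hst
  · rw [coeff_splice_of_le hts, coeff_toLaurent_apply, if_neg (not_le.mpr ht)]
  · rw [coeff_splice_of_lt hst, coeff_toLaurent_apply, if_neg (not_le.mpr ht)]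

end ToLaurent

instance isNoetherianRing {R : Type*} [CommRing R] [IsNoetherianRing R] :
    IsNoetherianRing (LaurentPolynomial R) :=
  IsLocalization.isNoetherianRing (Submonoid.powers (Polynomial.X : Polynomial R)) _ inferInstance

end LaurentPolynomial

section Sequences

variable {M : Type}

def LocallyMem (B : Set (ℤ → M)) (w : ℤ → M) : Prop :=
  ∀ a b : ℤ, ∃ x ∈ B, ∀ t : ℤ, a ≤ t → t ≤ b → x t = w t

theorem LocallyMem.mem_closure [TopologicalSpace M] {B : Set (ℤ → M)} {w : ℤ → M}
    (h : LocallyMem B w) : w ∈ closure B := by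
  rw [mem_closure_iff]
  intro U hU hwU
  obtain ⟨I, u, hu, hIU⟩ := isOpen_pi_iff.mp hU w hwU
  obtain ⟨m, hm⟩ : ∃ m : ℕ, ∀ i ∈ I, i.natAbs ≤ m := ⟨I.sup Int.natAbs, fun i hi => I.le_sup hi⟩
  obtain ⟨x, hxB, hxw⟩ := h (-m) m
  refine ⟨x, hIU fun i hi => ?_, hxB⟩
  rw [hxw i (by have := hm i hi; omega) (by have := hm i hi; omega)]
  exact (hu i hi).2

variable [AddCommMonoid M]

def repeatBlock (x : ℤ → M) (A : ℤ) (N : ℕ) : ℤ → M :=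
  fun t => if A ≤ t then x (A + (t - A) % N) else 0

variable {x : ℤ → M} {A : ℤ} {N : ℕ}

theorem repeatBlock_of_lt {t : ℤ} (ht : t < A) : repeatBlock x A N t = 0 :=
  if_neg (not_le.mpr ht)

theorem repeatBlock_add_mul {t : ℤ} (ht : t ∈ Set.Ico A (A + N)) (k : ℕ) :
    repeatBlock x A N (t + N * k) = x t := by
  obtain ⟨hAt, htN⟩ := ht
  have hmod : (t - A) % N = t - A := Int.emod_eq_of_lt (by omega) (by omega)
  have hNk : 0 ≤ (N : ℤ) * k := by positivity
  rw [repeatBlock, if_pos (by omega), add_sub_right_comm, Int.add_mul_emod_self_left, hmod,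
    add_sub_cancel]

theorem repeatBlock_eq_add (hN : 0 < N) (hx : Function.support x ⊆ Set.Ico A (A + N)) (t : ℤ) :
    repeatBlock x A N t = x t + repeatBlock x A N (t - N) := by
  have hx' : ∀ t, t ∉ Set.Ico A (A + N) → x t = 0 := fun t ht =>
    Function.notMem_support.mp fun h => ht (hx h)
  rcases lt_or_ge t A with htA | hAt
  · rw [repeatBlock_of_lt htA, repeatBlock_of_lt (t := t - N) (by omega), hx' t (by simp [htA]),
      add_zero]
  rcases lt_or_ge t (A + N) with htN | hNt
  · rw [repeatBlock_of_lt (t := t - N) (by omega), add_zero]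
    simpa using repeatBlock_add_mul (x := x) ⟨hAt, htN⟩ 0
  · rw [hx' t (by simp; omega), zero_add, repeatBlock, repeatBlock, if_pos hAt, if_pos (by omega),
      sub_right_comm, Int.sub_emod_right]

theorem locallyMem_repeatBlock {B : Set (ℤ → M)} (hadd : ∀ x ∈ B, ∀ y ∈ B, x + y ∈ B)
    (hshift : ∀ x ∈ B, ∀ m : ℕ, (fun t => x (t - m)) ∈ B) (hxB : x ∈ B) (hN : 0 < N)
    (hx : Function.support x ⊆ Set.Ico A (A + N)) : LocallyMem B (repeatBlock x A N) := by
  have key : ∀ K : ℕ, ∃ y ∈ B, ∀ t : ℤ, t < A + N * (K + 1) → y t = repeatBlock x A N t := by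
    intro K
    induction K with
    | zero =>
      refine ⟨x, hxB, fun t ht => ?_⟩
      rw [repeatBlock_eq_add hN hx, repeatBlock_of_lt (by push_cast at ht; omega), add_zero]
    | succ K ih =>
      obtain ⟨y, hyB, hy⟩ := ih
      refine ⟨x + fun t => y (t - N), hadd _ hxB _ (hshift y hyB N), fun t ht => ?_⟩
      rw [repeatBlock_eq_add hN hx t, Pi.add_apply, hy (t - N) (by push_cast at ht ⊢; linarith)]
  intro a b
  obtain ⟨y, hyB, hy⟩ := key (b - A).toNat
  refine ⟨y, hyB, fun t _ htb => hy t ?_⟩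
  have : (b - A).toNat + 1 ≤ (N : ℤ) * ((b - A).toNat + 1) :=
    le_mul_of_one_le_left (by positivity) (by exact_mod_cast hN)
  omega

theorem exists_locallyMem_not_mem {B : Set (ℤ → M)} (hadd : ∀ x ∈ B, ∀ y ∈ B, x + y ∈ B)
    (hshift : ∀ x ∈ B, ∀ m : ℕ, (fun t => x (t - m)) ∈ B)
    (hfin : ∀ x ∈ B, (Function.support x).Finite) (hne : ∃ x ∈ B, x ≠ 0) :
    ∃ w, LocallyMem B w ∧ w ∉ B := by
  obtain ⟨x, hxB, hx0⟩ := hne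
  obtain ⟨t₀, ht₀⟩ := Function.ne_iff.mp hx0
  obtain ⟨A, hA⟩ := (hfin x hxB).bddBelow
  obtain ⟨U, hU⟩ := (hfin x hxB).bddAbove
  obtain ⟨N, hN, hsupp⟩ : ∃ N : ℕ, 0 < N ∧ Function.support x ⊆ Set.Ico A (A + N) :=
    ⟨(U - A + 1).toNat, by have := hA ht₀; have := hU ht₀; omega,
      fun t ht => ⟨hA ht, by have := hU ht; omega⟩⟩
  refine ⟨_, locallyMem_repeatBlock hadd hshift hxB hN hsupp, fun hw => ?_⟩
  refine Set.not_infinite.mpr (hfin _ hw) (Set.infinite_of_injective_forall_mem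
    (f := fun k : ℕ => t₀ + N * k) (fun k l hkl => ?_) fun k => ?_)
  · exact Nat.cast_injective (mul_right_injective₀ (by positivity) (add_left_cancel hkl))
  · rw [Function.mem_support, repeatBlock_add_mul (hsupp ht₀) k]
    exact ht₀

end Sequences

section Behavior

open LaurentPolynomial

variable {𝔽 : Type} [Field 𝔽] {n : ℕ}

theorem pToSeq_eq_lpToSeq (v : Fin n → Polynomial 𝔽) :
    pToSeq v = lpToSeq fun a => Polynomial.toLaurent (v a) := by
  ext t a
  exact (coeff_toLaurent_apply _ _).symm

theorem lpToSeq_add (u v : Fin n → 𝔽[T;T⁻¹]) : lpToSeq (u + v) = lpToSeq u + lpToSeq v :=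
  rfl

theorem support_lpToSeq_finite (v : Fin n → 𝔽[T;T⁻¹]) :
    (Function.support (lpToSeq v)).Finite := by
  refine (Set.finite_iUnion fun a => (v a).coeff.support.finite_toSet).subset fun t ht => ?_
  obtain ⟨a, ha⟩ := Function.ne_iff.mp ht
  exact Set.mem_iUnion.mpr ⟨a, Finsupp.mem_support_iff.mpr ha⟩

theorem lpToSeq_T_mul (m : ℤ) (v : Fin n → 𝔽[T;T⁻¹]) (t : ℤ) :
    lpToSeq (fun a => T m * v a) t = lpToSeq v (t - m) := by
  ext a
  exact coeff_T_mul m t (v a)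

variable {R : Type*} [CommRing R] [Algebra R 𝔽[T;T⁻¹]]

theorem lpToSeq_sum_smul (S : Finset (Fin n → 𝔽[T;T⁻¹])) (c : (Fin n → 𝔽[T;T⁻¹]) → R)
    (t : ℤ) (a : Fin n) :
    lpToSeq (∑ g ∈ S, c g • g) t a = ∑ g ∈ S, (algebraMap R _ (c g) * g a).coeff t := by
  simp only [lpToSeq, Finset.sum_apply, Pi.smul_apply]
  simp only [Algebra.smul_def, AddMonoidAlgebra.coeff_sum, Finsupp.finsetSum_apply]

theorem lpToSeq_sum_smul_congr {S : Finset (Fin n → 𝔽[T;T⁻¹])} {c c' : (Fin n → 𝔽[T;T⁻¹]) → R}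
    {t : ℤ} {a : Fin n}
    (h : ∀ g ∈ S, ∀ x y, x + y = t → (g a).coeff y ≠ 0 →
      (algebraMap R 𝔽[T;T⁻¹] (c g)).coeff x = (algebraMap R 𝔽[T;T⁻¹] (c' g)).coeff x) :
    lpToSeq (∑ g ∈ S, c g • g) t a = lpToSeq (∑ g ∈ S, c' g • g) t a := by
  rw [lpToSeq_sum_smul, lpToSeq_sum_smul]
  exact Finset.sum_congr rfl fun g hg => coeff_mul_congr (h g hg)

theorem controllableBehavior_lpToSeq_image
    (hR : ∀ (p q : R) (s : ℤ),
      splice (algebraMap R _ p) (algebraMap R _ q) s ∈ Set.range (algebraMap R 𝔽[T;T⁻¹]))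
    {C : Submodule R (Fin n → 𝔽[T;T⁻¹])} (hC : C.FG) :
    ControllableBehavior (lpToSeq '' (C : Set (Fin n → 𝔽[T;T⁻¹]))) := by
  obtain ⟨S, rfl⟩ := hC
  obtain ⟨M, hM⟩ := exists_coeff_bound S
  refine ⟨2 * M + 1, ?_⟩
  rintro _ ⟨v, hv, rfl⟩ _ ⟨v', hv', rfl⟩ j
  obtain ⟨c, -, rfl⟩ := Submodule.mem_span_finset.mp hv
  obtain ⟨c', -, rfl⟩ := Submodule.mem_span_finset.mp hv'
  -- Each generator has support in `[-M, M]`, so splicing the coefficients at `j + M` changes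
  -- nothing up to time `j` and everything from time `j + 2M + 1` on.
  choose r hr using fun g => hR (c g) (c' g) (j + M)
  refine ⟨_, ⟨∑ g ∈ S, r g • g,
    Submodule.sum_mem _ fun g hg => Submodule.smul_mem _ _ (Submodule.subset_span hg), rfl⟩,
    fun t ht => funext fun a => ?_, fun t ht => funext fun a => ?_⟩
  · refine lpToSeq_sum_smul_congr fun g hg x y hxy hy => ?_
    have := hM g hg a y hy
    rw [hr, coeff_splice_of_le (by omega)]
  · refine lpToSeq_sum_smul_congr fun g hg x y hxy hy => ?_
    have := hM g hg a y hy
    rw [hr, coeff_splice_of_lt (by omega)]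

theorem exists_locallyMem_lpToSeq_image_not_mem {X : R} (hX : algebraMap R 𝔽[T;T⁻¹] X = T 1)
    {C : Submodule R (Fin n → 𝔽[T;T⁻¹])} (hC : C ≠ ⊥) :
    ∃ w, LocallyMem (lpToSeq '' (C : Set (Fin n → 𝔽[T;T⁻¹]))) w ∧
      w ∉ lpToSeq '' (C : Set (Fin n → 𝔽[T;T⁻¹])) := by
  refine exists_locallyMem_not_mem ?_ ?_ ?_ ?_
  · rintro _ ⟨u, hu, rfl⟩ _ ⟨v, hv, rfl⟩
    exact ⟨u + v, C.add_mem hu hv, lpToSeq_add u v⟩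
  · rintro _ ⟨v, hv, rfl⟩ m
    refine ⟨X ^ m • v, C.smul_mem _ hv, funext fun t => ?_⟩
    rw [← lpToSeq_T_mul]
    congr 1
    ext1 a
    rw [Pi.smul_apply, Algebra.smul_def, map_pow, hX, T_pow, mul_one]
  · rintro _ ⟨v, -, rfl⟩
    exact support_lpToSeq_finite v
  · obtain ⟨v, hv, hv0⟩ := (Submodule.ne_bot_iff C).mp hC
    refine ⟨_, ⟨v, hv, rfl⟩, fun h => hv0 (funext fun a => LaurentPolynomial.ext fun t => ?_)⟩
    exact congrFun (congrFun h t) a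

theorem controllableBehavior_and_not_complete_lpToSeq_image [TopologicalSpace 𝔽]
    (hR : ∀ (p q : R) (s : ℤ),
      splice (algebraMap R _ p) (algebraMap R _ q) s ∈ Set.range (algebraMap R 𝔽[T;T⁻¹]))
    {X : R} (hX : algebraMap R 𝔽[T;T⁻¹] X = T 1)
    {C : Submodule R (Fin n → 𝔽[T;T⁻¹])} (hfg : C.FG) (hC : C ≠ ⊥) :
    ControllableBehavior (lpToSeq '' (C : Set (Fin n → 𝔽[T;T⁻¹]))) ∧
      ¬ CompleteBehavior (lpToSeq '' (C : Set (Fin n → 𝔽[T;T⁻¹]))) ∧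
      ¬ IsClosed (lpToSeq '' (C : Set (Fin n → 𝔽[T;T⁻¹]))) := by
  obtain ⟨w, hw, hwC⟩ := exists_locallyMem_lpToSeq_image_not_mem hX hC
  exact ⟨controllableBehavior_lpToSeq_image hR hfg, fun hB => hwC (hB w hw),
    fun hB => hwC (hB.closure_eq ▸ hw.mem_closure)⟩

end Behavior

theorem finite_support_code_controllable_not_complete_general
    (𝔽 : Type) [Field 𝔽] [TopologicalSpace 𝔽]
    (n : ℕ)
    (C : Submodule (LaurentPolynomial 𝔽) (Fin n → LaurentPolynomial 𝔽)) (hC : C ≠ ⊥)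
    (D : Submodule (Polynomial 𝔽) (Fin n → Polynomial 𝔽)) (hD : D ≠ ⊥) :
    (ControllableBehavior (lpToSeq '' (C : Set (Fin n → LaurentPolynomial 𝔽))) ∧
      ¬ CompleteBehavior (lpToSeq '' (C : Set (Fin n → LaurentPolynomial 𝔽))) ∧
      ¬ IsClosed (lpToSeq '' (C : Set (Fin n → LaurentPolynomial 𝔽)))) ∧
    (ControllableBehavior (pToSeq '' (D : Set (Fin n → Polynomial 𝔽))) ∧
      ¬ CompleteBehavior (pToSeq '' (D : Set (Fin n → Polynomial 𝔽))) ∧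
      ¬ IsClosed (pToSeq '' (D : Set (Fin n → Polynomial 𝔽)))) := by
  refine ⟨controllableBehavior_and_not_complete_lpToSeq_image (fun _ _ _ => ⟨_, rfl⟩)
    (X := (LaurentPolynomial.T 1 : LaurentPolynomial 𝔽))
    rfl (IsNoetherian.noetherian C) hC, ?_⟩
  let φ : (Fin n → Polynomial 𝔽) →ₗ[Polynomial 𝔽] Fin n → LaurentPolynomial 𝔽 :=
    (Algebra.linearMap _ _).compLeft (Fin n)
  have hφ : Function.Injective φ := fun u v huv =>
    funext fun a => Polynomial.toLaurent_injective (congrFun huv a)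
  have himage : pToSeq '' (D : Set (Fin n → Polynomial 𝔽)) = lpToSeq '' (D.map φ : Set _) := by
    rw [Submodule.map_coe, Set.image_image]
    exact Set.image_congr fun v _ => pToSeq_eq_lpToSeq v
  rw [himage]
  exact controllableBehavior_and_not_complete_lpToSeq_image
    LaurentPolynomial.splice_toLaurent_mem_range
    Polynomial.toLaurent_X ((IsNoetherian.noetherian D).map φ)
    (by simpa using (Submodule.map_injective_of_injective hφ).ne hD)

/-- A nonzero `𝔽[z,z⁻¹]`-submodule of `𝔽^n[z,z⁻¹]` (equivalently, a nonzero
`𝔽[z]`-submodule of `𝔽^n[z]`), viewed as a set of finite-support bi-infinite sequences, is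
controllable and not complete (equivalently, not closed). -/
theorem finite_support_code_controllable_not_complete
    (𝔽 : Type) [Field 𝔽] [Fintype 𝔽] [TopologicalSpace 𝔽] [DiscreteTopology 𝔽]
    (n : ℕ)
    (C : Submodule (LaurentPolynomial 𝔽) (Fin n → LaurentPolynomial 𝔽)) (hC : C ≠ ⊥)
    (D : Submodule (Polynomial 𝔽) (Fin n → Polynomial 𝔽)) (hD : D ≠ ⊥) :
    (ControllableBehavior (lpToSeq '' (C : Set (Fin n → LaurentPolynomial 𝔽))) ∧
      ¬ CompleteBehavior (lpToSeq '' (C : Set (Fin n → LaurentPolynomial 𝔽))) ∧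
      ¬ IsClosed (lpToSeq '' (C : Set (Fin n → LaurentPolynomial 𝔽)))) ∧
    (ControllableBehavior (pToSeq '' (D : Set (Fin n → Polynomial 𝔽))) ∧
      ¬ CompleteBehavior (pToSeq '' (D : Set (Fin n → Polynomial 𝔽))) ∧
      ¬ IsClosed (pToSeq '' (D : Set (Fin n → Polynomial 𝔽)))) :=
  finite_support_code_controllable_not_complete_general 𝔽 n C hC D hD
end

section
/- (a) If C ⊆ 𝔽^n[z,z^{-1}] is the 𝔽[z,z^{-1}]-span of the columns of an n×k matrix G(z) over 𝔽[z,z^{-1}], then its annihilator C^⊥ = { w ∈ (𝔽^n)^ℤ : (w,v) = 0 for all v ∈ C } equals ker G^t(σ); in particular C^⊥ is 𝔽-linear, shift-invariant, and complete. (b) Conversely, if B = ker P(σ) ⊆ (𝔽^n)^ℤ for an r×n matrix P(z) over 𝔽[z,z^{-1}], then B^⊥ = { v ∈ 𝔽^n[z,z^{-1}] : (w,v) = 0 for all w ∈ B } equals the 𝔽[z,z^{-1}]-span of the columns of P^t(z). -/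
open Matrix

section ConvolutionalDefs

variable {𝔽 : Type} [Field 𝔽]

/-- A subset of a module is `𝔽`-linear. -/
def IsFLinearSet (𝔽 : Type) [Field 𝔽] {M : Type} [AddCommGroup M] [Module 𝔽 M]
    (C : Set M) : Prop :=
  (0 : M) ∈ C ∧ (∀ x ∈ C, ∀ y ∈ C, x + y ∈ C) ∧ ∀ (c : 𝔽), ∀ x ∈ C, c • x ∈ C

end ConvolutionalDefs

/-!
A sequence `w` defines the `𝔽`-linear functional `v ↦ (w, v)` on `𝔽^n[z,z⁻¹]`, and every
functional arises this way because the vectors `z^t e_a` (`Pi.single a (T t)`) form an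
`𝔽`-basis. The entries of `Gᵗ(σ)w` are the pairings `(w, z^t g_b)` with the columns `g_b` of
`G`, and these vectors span the column module over `𝔽`; hence `C^⊥ = ker Gᵗ(σ)`. Part (b) is then
the double annihilator theorem `W^⊥⊥ = W` for the `𝔽`-subspace `W` spanned by the columns of
`Pᵗ`, since `ker P(σ) = W^⊥` by (a).
-/

open LaurentPolynomial

section ConvolutionalDuality

variable {𝔽 : Type} [Field 𝔽]

section Pairing

variable {n : ℕ}

lemma seqPairing_add (w : ℤ → Fin n → 𝔽) (v v' : Fin n → 𝔽[T;T⁻¹]) :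
    seqPairing w (v + v') = seqPairing w v + seqPairing w v' := by
  simp [seqPairing, Finsupp.sum_add_index', mul_add, Finset.sum_add_distrib]

lemma seqPairing_smul (w : ℤ → Fin n → 𝔽) (c : 𝔽) (v : Fin n → 𝔽[T;T⁻¹]) :
    seqPairing w (c • v) = c * seqPairing w v := by
  simp [seqPairing, Finsupp.sum_smul_index', Finset.mul_sum, Finsupp.mul_sum, mul_left_comm]

noncomputable def seqPairingₗ (w : ℤ → Fin n → 𝔽) : Module.Dual 𝔽 (Fin n → 𝔽[T;T⁻¹]) where
  toFun := seqPairing w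
  map_add' := seqPairing_add w
  map_smul' := seqPairing_smul w

@[simp]
lemma seqPairingₗ_apply (w : ℤ → Fin n → 𝔽) (v : Fin n → 𝔽[T;T⁻¹]) :
    seqPairingₗ w v = seqPairing w v := rfl

lemma seqPairing_single_T (w : ℤ → Fin n → 𝔽) (a : Fin n) (t : ℤ) :
    seqPairing w (Pi.single a (T t)) = w t a := by
  rw [seqPairing, Finset.sum_eq_single a (fun b _ hb => by simp [hb]) (by simp)]
  simp [T, -single_eq_C_mul_T]

noncomputable def laurentVecBasis (n : ℕ) : Module.Basis (Σ _ : Fin n, ℤ) 𝔽 (Fin n → 𝔽[T;T⁻¹]) :=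
  Pi.basis fun _ => AddMonoidAlgebra.basis ℤ 𝔽

lemma laurentVecBasis_apply (i : Σ _ : Fin n, ℤ) :
    laurentVecBasis (𝔽 := 𝔽) n i = Pi.single i.1 (T i.2) := by
  simp [laurentVecBasis, Pi.basis_apply]

lemma seqPairingₗ_surjective :
    Function.Surjective (seqPairingₗ (𝔽 := 𝔽) (n := n)) :=
  fun φ => ⟨fun t a => φ (Pi.single a (T t)), (laurentVecBasis n).ext fun i => by
    simp [laurentVecBasis_apply, seqPairing_single_T]⟩

lemma seqPairing_T_smul (w : ℤ → Fin n → 𝔽) (t : ℤ) (v : Fin n → 𝔽[T;T⁻¹]) :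
    seqPairing w ((T t : 𝔽[T;T⁻¹]) • v) = seqPairing (fun i => w (t + i)) v := by
  have hcomp : (seqPairingₗ w).comp (DistribSMul.toLinearMap 𝔽 _ (T t : 𝔽[T;T⁻¹])) =
      seqPairingₗ (fun i => w (t + i)) :=
    (laurentVecBasis n).ext fun i => by
      rw [LinearMap.comp_apply, DistribSMul.toLinearMap_apply, laurentVecBasis_apply,
        ← Pi.single_smul', smul_eq_mul, ← T_add, seqPairingₗ_apply, seqPairingₗ_apply,
        seqPairing_single_T, seqPairing_single_T]
  exact LinearMap.congr_fun hcomp v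

end Pairing

section Annihilator

variable {n k : ℕ}

lemma lSigma_apply_eq_seqPairing (M : Matrix (Fin k) (Fin n) 𝔽[T;T⁻¹]) (w : ℤ → Fin n → 𝔽)
    (t : ℤ) (b : Fin k) : lSigma M w t b = seqPairing w ((T t : 𝔽[T;T⁻¹]) • M b) := by
  rw [seqPairing_T_smul]
  simp only [lSigma, seqPairing, mul_comm]

lemma seqPairingₗ_mem_dualAnnihilator_iff (M : Matrix (Fin k) (Fin n) 𝔽[T;T⁻¹])
    (w : ℤ → Fin n → 𝔽) :
    seqPairingₗ w ∈
        ((Submodule.span 𝔽[T;T⁻¹] (Set.range M)).restrictScalars 𝔽).dualAnnihilator ↔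
      lSigma M w = 0 := by
  have hT : Submodule.span 𝔽 (Set.range (T : ℤ → 𝔽[T;T⁻¹])) = ⊤ :=
    (AddMonoidAlgebra.basis ℤ 𝔽).span_eq
  rw [Submodule.mem_dualAnnihilator, ← Submodule.span_smul_of_span_eq_top hT]
  change Submodule.span 𝔽 _ ≤ LinearMap.ker (seqPairingₗ w) ↔ _
  rw [Submodule.span_le, Set.smul_subset_iff]
  simp only [Set.forall_mem_range (f := (M : Fin k → Fin n → 𝔽[T;T⁻¹])), Set.forall_mem_range,
    SetLike.mem_coe, LinearMap.mem_ker, seqPairingₗ_apply, ← lSigma_apply_eq_seqPairing,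
    funext_iff, Pi.zero_apply]

lemma seqPairing_annihilator_span_eq (M : Matrix (Fin k) (Fin n) 𝔽[T;T⁻¹]) :
    { w : ℤ → Fin n → 𝔽 | ∀ v ∈ Submodule.span 𝔽[T;T⁻¹] (Set.range M), seqPairing w v = 0 } =
      { w | lSigma M w = 0 } := by
  ext w
  rw [Set.mem_ofPred_eq, Set.mem_ofPred_eq, ← seqPairingₗ_mem_dualAnnihilator_iff,
    Submodule.mem_dualAnnihilator]
  rfl

lemma seqPairing_annihilator_kernel_eq_span (M : Matrix (Fin k) (Fin n) 𝔽[T;T⁻¹]) :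
    { v : Fin n → 𝔽[T;T⁻¹] | ∀ w ∈ { w : ℤ → Fin n → 𝔽 | lSigma M w = 0 }, seqPairing w v = 0 } =
      Submodule.span 𝔽[T;T⁻¹] (Set.range M) := by
  ext v
  change _ ↔ v ∈ (Submodule.span 𝔽[T;T⁻¹] (Set.range M)).restrictScalars 𝔽
  rw [← Subspace.dualAnnihilator_dualCoannihilator_eq
      (W := (Submodule.span 𝔽[T;T⁻¹] (Set.range M)).restrictScalars 𝔽),
    Submodule.mem_dualCoannihilator, seqPairingₗ_surjective.forall]
  simp only [Set.mem_ofPred_eq, seqPairingₗ_mem_dualAnnihilator_iff, seqPairingₗ_apply]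

end Annihilator

section Kernel

variable {n k : ℕ}

noncomputable def lSigmaₗ (M : Matrix (Fin k) (Fin n) 𝔽[T;T⁻¹]) :
    (ℤ → Fin n → 𝔽) →ₗ[𝔽] ℤ → Fin k → 𝔽 where
  toFun := lSigma M
  map_add' w w' := by
    funext t b
    simp [lSigma, Finsupp.sum, mul_add, Finset.sum_add_distrib]
  map_smul' c w := by
    funext t b
    simp [lSigma, Finsupp.sum, Finset.mul_sum, mul_left_comm]

lemma Submodule.isFLinearSet {V : Type} [AddCommGroup V] [Module 𝔽 V] (p : Submodule 𝔽 V) :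
    IsFLinearSet 𝔽 (p : Set V) :=
  ⟨p.zero_mem, fun _ hx _ hy => p.add_mem hx hy, fun c _ hx => p.smul_mem c hx⟩

lemma isFLinearSet_setOf_lSigma_eq_zero (M : Matrix (Fin k) (Fin n) 𝔽[T;T⁻¹]) :
    IsFLinearSet 𝔽 { w : ℤ → Fin n → 𝔽 | lSigma M w = 0 } :=
  (LinearMap.ker (lSigmaₗ M)).isFLinearSet

lemma lSigma_shiftZ (M : Matrix (Fin k) (Fin n) 𝔽[T;T⁻¹]) (w : ℤ → Fin n → 𝔽) :
    lSigma M (shiftZ w) = shiftZ (lSigma M w) := by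
  funext t b
  simp only [lSigma, shiftZ, add_right_comm]

lemma shiftInvariant_setOf_lSigma_eq_zero (M : Matrix (Fin k) (Fin n) 𝔽[T;T⁻¹]) :
    ShiftInvariant { w : ℤ → Fin n → 𝔽 | lSigma M w = 0 } := by
  intro w (hw : lSigma M w = 0)
  change lSigma M (shiftZ w) = 0
  rw [lSigma_shiftZ, hw]
  rfl

lemma exists_lSigma_eq_of_eqOn_window (M : Matrix (Fin k) (Fin n) 𝔽[T;T⁻¹]) :
    ∃ N : ℕ, ∀ (x w : ℤ → Fin n → 𝔽) (t : ℤ),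
      (∀ s, t - N ≤ s → s ≤ t + N → x s = w s) → lSigma M x t = lSigma M w t := by
  refine ⟨Finset.univ.sup fun p : Fin k × Fin n => (M p.1 p.2).coeff.support.sup Int.natAbs,
    fun x w t hxw => ?_⟩
  funext b
  refine Finset.sum_congr rfl fun a _ => Finsupp.sum_congr fun i hi => ?_
  have hiN := (Finset.le_sup (f := Int.natAbs) hi).trans
    (Finset.le_sup (f := fun p : Fin k × Fin n => (M p.1 p.2).coeff.support.sup Int.natAbs)
      (Finset.mem_univ (b, a)))
  rw [hxw (t + i) (by omega) (by omega)]

lemma completeBehavior_setOf_lSigma_eq_zero (M : Matrix (Fin k) (Fin n) 𝔽[T;T⁻¹]) :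
    CompleteBehavior { w : ℤ → Fin n → 𝔽 | lSigma M w = 0 } := by
  intro w hw
  obtain ⟨N, hN⟩ := exists_lSigma_eq_of_eqOn_window M
  funext t
  obtain ⟨x, hx0, hxw⟩ := hw (t - N) (t + N)
  rw [← hN x w t hxw]
  exact congrFun hx0 t

end Kernel

end ConvolutionalDuality

theorem module_behavior_duality_general
    (𝔽 : Type) [Field 𝔽]
    (n k r : ℕ) (G : Matrix (Fin n) (Fin k) (LaurentPolynomial 𝔽))
    (P : Matrix (Fin r) (Fin n) (LaurentPolynomial 𝔽)) :
    (({ w : ℤ → Fin n → 𝔽 |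
        ∀ v ∈ Submodule.span (LaurentPolynomial 𝔽) (Set.range Gᵀ), seqPairing w v = 0 } =
          { w : ℤ → Fin n → 𝔽 | lSigma Gᵀ w = 0 }) ∧
      IsFLinearSet 𝔽 { w : ℤ → Fin n → 𝔽 | lSigma Gᵀ w = 0 } ∧
      ShiftInvariant { w : ℤ → Fin n → 𝔽 | lSigma Gᵀ w = 0 } ∧
      CompleteBehavior { w : ℤ → Fin n → 𝔽 | lSigma Gᵀ w = 0 }) ∧
    ({ v : Fin n → LaurentPolynomial 𝔽 |
        ∀ w ∈ { w : ℤ → Fin n → 𝔽 | lSigma P w = 0 }, seqPairing w v = 0 } =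
      (Submodule.span (LaurentPolynomial 𝔽) (Set.range Pᵀᵀ) :
        Set (Fin n → LaurentPolynomial 𝔽))) := by
  refine ⟨⟨seqPairing_annihilator_span_eq Gᵀ, isFLinearSet_setOf_lSigma_eq_zero Gᵀ,
    shiftInvariant_setOf_lSigma_eq_zero Gᵀ, completeBehavior_setOf_lSigma_eq_zero Gᵀ⟩, ?_⟩
  rw [transpose_transpose]
  exact seqPairing_annihilator_kernel_eq_span P

/-- Pontryagin duality: (a) the annihilator of the column module of a Laurent
polynomial matrix `G(z)` is the kernel behavior `ker Gᵗ(σ)`, hence `𝔽`-linear, shift-invariant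
and complete; (b) conversely, the annihilator of a kernel behavior `ker P(σ)` is the column
module of `Pᵗ(z)`. -/
theorem module_behavior_duality
    (𝔽 : Type) [Field 𝔽] [Fintype 𝔽]
    (n k r : ℕ) (G : Matrix (Fin n) (Fin k) (LaurentPolynomial 𝔽))
    (P : Matrix (Fin r) (Fin n) (LaurentPolynomial 𝔽)) :
    (({ w : ℤ → Fin n → 𝔽 |
        ∀ v ∈ Submodule.span (LaurentPolynomial 𝔽) (Set.range Gᵀ), seqPairing w v = 0 } =
          { w : ℤ → Fin n → 𝔽 | lSigma Gᵀ w = 0 }) ∧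
      IsFLinearSet 𝔽 { w : ℤ → Fin n → 𝔽 | lSigma Gᵀ w = 0 } ∧
      ShiftInvariant { w : ℤ → Fin n → 𝔽 | lSigma Gᵀ w = 0 } ∧
      CompleteBehavior { w : ℤ → Fin n → 𝔽 | lSigma Gᵀ w = 0 }) ∧
    ({ v : Fin n → LaurentPolynomial 𝔽 |
        ∀ w ∈ { w : ℤ → Fin n → 𝔽 | lSigma P w = 0 }, seqPairing w v = 0 } =
      (Submodule.span (LaurentPolynomial 𝔽) (Set.range Pᵀᵀ) :
        Set (Fin n → LaurentPolynomial 𝔽))) :=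
  module_behavior_duality_general 𝔽 n k r G P
end
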